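/- arXiv:math/0404008 — 2 statements merged into one kernel-verified Lean document; each statement's English description precedes it below -/
import Mathlib

section
/- For every i ≥ 1 one has D₁(u_i) = 0 and D₂(u_i) = q21^{-1}·(1 − q12·q21·q22^{i-1})·[i]_{q22^{-1}}·u_{i-1}, where the elements u_i ∈ F are defined by u_0 := x1 and u_{i+1} := u_i·x2 − q12·q22^i·x2·u_i. In particular u_i lies in the kernel of D₁ and is annihilated by D₂ composed i times if and only if some factor (1 − q12·q21·q22^{j})·[j+1]_{q22^{-1}} with j < i vanishes. -/
noncomputable section

variable {k : Type*} [Field k]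

/-- The algebra endomorphism of the free algebra on two generators with
`x1 ↦ a • x1`, `x2 ↦ b • x2`. -/
def alph (a b : k) : FreeAlgebra k (Fin 2) →ₐ[k] FreeAlgebra k (Fin 2) :=
  FreeAlgebra.lift k ![a • FreeAlgebra.ι k 0, b • FreeAlgebra.ι k 1]

/-- The elements `z_i`, defined by `z_0 = x2`, `z_{i+1} = x1·z_i − q11^i·q12·z_i·x1`. -/
def zz (q11 q12 : k) : ℕ → FreeAlgebra k (Fin 2)
  | 0 => FreeAlgebra.ι k 1
  | (i + 1) => FreeAlgebra.ι k 0 * zz q11 q12 i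
      - (q11 ^ i * q12) • (zz q11 q12 i * FreeAlgebra.ι k 0)

/-- The elements `u_i`, defined by `u_0 = x1`, `u_{i+1} = u_i·x2 − q12·q22^i·x2·u_i`. -/
def uu (q12 q22 : k) : ℕ → FreeAlgebra k (Fin 2)
  | 0 => FreeAlgebra.ι k 0
  | (i + 1) => uu q12 q22 i * FreeAlgebra.ι k 1
      - (q12 * q22 ^ i) • (FreeAlgebra.ι k 1 * uu q12 q22 i)

/-- The q-number `[m]_p = 1 + p + ⋯ + p^{m-1}`. -/
def qnum (p : k) (m : ℕ) : k := ∑ j ∈ Finset.range m, p ^ j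

/-- The q-factorial `[m]!_p = [1]_p·[2]_p⋯[m]_p`. -/
def qfact (p : k) (m : ℕ) : k := ∏ l ∈ Finset.range m, qnum p (l + 1)

/-- `b_i = ∏_{j=0}^{i-1} (1 − q11^j·q12·q21)`. -/
def bb (q11 q12 q21 : k) (i : ℕ) : k :=
  ∏ j ∈ Finset.range i, (1 - q11 ^ j * q12 * q21)

/-- `c_i = q21^{-i}·b_i·[i]!_{q11⁻¹}`. -/
def cc (q11 q12 q21 : k) (i : ℕ) : k :=
  q21⁻¹ ^ i * bb q11 q12 q21 i * qfact q11⁻¹ i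

/-- `d_{i,0}`. -/
def dd (q11 q12 q21 q22 : k) (i : ℕ) : k :=
  q21⁻¹ * (1 - q11 ^ i * q12 * q21) * qnum q11⁻¹ (i + 1)
    + (q11 ^ (i * (i + 1)) * q12 ^ i * q21 ^ (i + 1) * q22)⁻¹
    - q11 ^ (i * (i + 1)) * q12 ^ (i + 1) * q21 ^ i * q22

/-! Every `alph a b` scales `u_n` by `a·bⁿ`, so the twisted Leibniz rule applied to
`u_{n+1} = u_n·x2 − q12·q22ⁿ·x2·u_n` expresses `D(u_{n+1})` through `D(u_n)` and `u_n`.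
For `D1` the twist `q12⁻¹` on `x2` cancels the coefficient `q12`, so `D1(u_{n+1}) = 0`.
For `D2` the twist `q22⁻¹` turns `q12·q22ⁿ` into `q12·q22ⁿ⁻¹`, so `D2(u_{n+1}) = λₙ·u_n` with
`λₙ = Σ_{j ≤ n} (q21⁻¹·q22⁻ʲ − q12·q22ʲ)`, which is the stated coefficient. Iterating,
`D2^[i](u_i) = (∏_{j<i} λ_j)·x1`, and `x1 ≠ 0`. -/

open FreeAlgebra Finset

@[simp]
lemma alph_ι_zero (a b : k) : alph a b (ι k 0) = a • ι k 0 := by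
  simp [alph]

@[simp]
lemma alph_ι_one (a b : k) : alph a b (ι k 1) = b • ι k 1 := by
  simp [alph]

lemma alph_uu (a b q12 q22 : k) (n : ℕ) :
    alph a b (uu q12 q22 n) = (a * b ^ n) • uu q12 q22 n := by
  induction n with
  | zero => simp [uu]
  | succ n ih =>
    simp only [uu, map_sub, map_smul, map_mul, ih, alph_ι_one, smul_mul_smul_comm, smul_sub,
      smul_smul]
    congr 2 <;> ring

lemma LinearMap.iterate_apply_eq_prod_smul {M : Type*} [AddCommGroup M] [Module k M]
    (D : M →ₗ[k] M) (v : ℕ → M) (c : ℕ → k) (hc : ∀ n, D (v (n + 1)) = c n • v n) (n : ℕ) :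
    (⇑D)^[n] (v n) = (∏ j ∈ Finset.range n, c j) • v 0 := by
  induction n with
  | zero => simp
  | succ n ih =>
    rw [Function.iterate_succ_apply, hc, ← Module.End.pow_apply, map_smul, Module.End.pow_apply,
      ih, smul_smul, prod_range_succ, mul_comm]

section TwistedDerivation

variable (q12 q22 : k) (D : FreeAlgebra k (Fin 2) →ₗ[k] FreeAlgebra k (Fin 2))

lemma map_uu_succ_eq_zero (a : k) (hq12 : q12 ≠ 0)
    (hx1 : D (ι k 0) = 1) (hx2 : D (ι k 1) = 0)
    (hmul : ∀ x y, D (x * y) = D x * y + alph a q12⁻¹ x * D y) (n : ℕ) :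
    D (uu q12 q22 (n + 1)) = 0 := by
  have step : ∀ m, D (uu q12 q22 (m + 1))
      = D (uu q12 q22 m) * ι k 1 - (q12 * q22 ^ m * q12⁻¹) • (ι k 1 * D (uu q12 q22 m)) := by
    intro m
    simp only [uu, map_sub, map_smul, hmul, hx2, alph_ι_one, mul_zero, add_zero, zero_mul,
      zero_add, smul_mul_assoc, smul_smul]
  induction n with
  | zero => rw [step, uu, hx1]; simp [hq12]
  | succ n ih => rw [step, ih]; simp

lemma map_uu_succ_eq_sum_smul (a : k) (hq22 : q22 ≠ 0)
    (hx1 : D (ι k 0) = 0) (hx2 : D (ι k 1) = 1)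
    (hmul : ∀ x y, D (x * y) = D x * y + alph a q22⁻¹ x * D y) (n : ℕ) :
    D (uu q12 q22 (n + 1))
      = (∑ j ∈ range (n + 1), (a * q22⁻¹ ^ j - q12 * q22 ^ j)) • uu q12 q22 n := by
  have step : ∀ m, D (uu q12 q22 (m + 1))
      = D (uu q12 q22 m) * ι k 1 - (q12 * q22 ^ m * q22⁻¹) • (ι k 1 * D (uu q12 q22 m))
        + (a * q22⁻¹ ^ m - q12 * q22 ^ m) • uu q12 q22 m := by
    intro m
    simp only [uu, map_sub, map_smul, hmul, hx2, alph_ι_one, alph_uu, mul_one, one_mul,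
      smul_mul_assoc, smul_smul, smul_add, sub_smul]
    abel
  induction n with
  | zero => rw [step, uu, hx1]; simp
  | succ n ih =>
    have hpow : q12 * q22 ^ (n + 1) * q22⁻¹ = q12 * q22 ^ n := by
      rw [pow_succ]; field_simp
    rw [step, ih, sum_range_succ _ (n + 1), add_smul, smul_mul_assoc, mul_smul_comm, smul_smul,
      mul_comm _ (∑ j ∈ range (n + 1), _), ← smul_smul, ← smul_sub, hpow, ← uu]

end TwistedDerivation

lemma pow_mul_qnum_inv {p : k} (hp : p ≠ 0) (n : ℕ) :
    p ^ n * qnum p⁻¹ (n + 1) = ∑ j ∈ range (n + 1), p ^ j := by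
  rw [qnum, mul_sum, ← sum_range_reflect]
  refine sum_congr rfl fun j hj => ?_
  have hjn : j ≤ n := Nat.lt_succ_iff.mp (mem_range.mp hj)
  rw [Nat.add_sub_cancel, inv_pow, ← Nat.sub_add_cancel hjn, pow_add, Nat.add_sub_cancel]
  field_simp

lemma sum_inv_pow_sub_pow_eq_mul_qnum (q12 q21 q22 : k) (hq21 : q21 ≠ 0) (hq22 : q22 ≠ 0)
    (n : ℕ) :
    ∑ j ∈ range (n + 1), (q21⁻¹ * q22⁻¹ ^ j - q12 * q22 ^ j)
      = q21⁻¹ * (1 - q12 * q21 * q22 ^ n) * qnum q22⁻¹ (n + 1) := by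
  rw [sum_sub_distrib, ← mul_sum, ← mul_sum, ← pow_mul_qnum_inv hq22, qnum]
  field_simp

theorem D_u_eq_general
    (q11 q12 q21 q22 : k)
    (hq12 : q12 ≠ 0) (hq21 : q21 ≠ 0) (hq22 : q22 ≠ 0)
    (D1 : FreeAlgebra k (Fin 2) →ₗ[k] FreeAlgebra k (Fin 2))
    (hD1x1 : D1 (FreeAlgebra.ι k 0) = 1)
    (hD1x2 : D1 (FreeAlgebra.ι k 1) = 0)
    (hD1mul : ∀ a b : FreeAlgebra k (Fin 2),
      D1 (a * b) = D1 a * b + alph q11⁻¹ q12⁻¹ a * D1 b)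
    (D2 : FreeAlgebra k (Fin 2) →ₗ[k] FreeAlgebra k (Fin 2))
    (hD2x1 : D2 (FreeAlgebra.ι k 0) = 0)
    (hD2x2 : D2 (FreeAlgebra.ι k 1) = 1)
    (hD2mul : ∀ a b : FreeAlgebra k (Fin 2),
      D2 (a * b) = D2 a * b + alph q21⁻¹ q22⁻¹ a * D2 b)
 :
    ∀ i : ℕ, 1 ≤ i →
      D1 (uu q12 q22 i) = 0 ∧
      D2 (uu q12 q22 i)
        = (q21⁻¹ * (1 - q12 * q21 * q22 ^ (i - 1)) * qnum q22⁻¹ i) • uu q12 q22 (i - 1) ∧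
      ((⇑D2)^[i] (uu q12 q22 i) = 0 ↔
        ∃ j < i, (1 - q12 * q21 * q22 ^ j) * qnum q22⁻¹ (j + 1) = 0) := by
  have hD2 : ∀ n, D2 (uu q12 q22 (n + 1))
      = (q21⁻¹ * (1 - q12 * q21 * q22 ^ n) * qnum q22⁻¹ (n + 1)) • uu q12 q22 n := fun n => by
    rw [map_uu_succ_eq_sum_smul q12 q22 D2 _ hq22 hD2x1 hD2x2 hD2mul,
      sum_inv_pow_sub_pow_eq_mul_qnum q12 q21 q22 hq21 hq22]
  intro i hi
  obtain ⟨n, rfl⟩ : ∃ n, i = n + 1 := ⟨i - 1, by omega⟩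
  refine ⟨map_uu_succ_eq_zero q12 q22 D1 _ hq12 hD1x1 hD1x2 hD1mul n, hD2 n, ?_⟩
  rw [LinearMap.iterate_apply_eq_prod_smul D2 _ _ hD2, smul_eq_zero, prod_eq_zero_iff]
  simp only [uu, ι_ne_zero, or_false, mem_range, mul_assoc, mul_eq_zero, inv_ne_zero hq21,
    false_or]

theorem D_u_eq
    (q11 q12 q21 q22 : k)
    (hq11 : q11 ≠ 0) (hq12 : q12 ≠ 0) (hq21 : q21 ≠ 0) (hq22 : q22 ≠ 0)
    (D1 : FreeAlgebra k (Fin 2) →ₗ[k] FreeAlgebra k (Fin 2))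
    (hD1one : D1 1 = 0)
    (hD1x1 : D1 (FreeAlgebra.ι k 0) = 1)
    (hD1x2 : D1 (FreeAlgebra.ι k 1) = 0)
    (hD1mul : ∀ a b : FreeAlgebra k (Fin 2),
      D1 (a * b) = D1 a * b + alph q11⁻¹ q12⁻¹ a * D1 b)
    (D2 : FreeAlgebra k (Fin 2) →ₗ[k] FreeAlgebra k (Fin 2))
    (hD2one : D2 1 = 0)
    (hD2x1 : D2 (FreeAlgebra.ι k 0) = 0)
    (hD2x2 : D2 (FreeAlgebra.ι k 1) = 1)
    (hD2mul : ∀ a b : FreeAlgebra k (Fin 2),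
      D2 (a * b) = D2 a * b + alph q21⁻¹ q22⁻¹ a * D2 b)
 :
    ∀ i : ℕ, 1 ≤ i →
      D1 (uu q12 q22 i) = 0 ∧
      D2 (uu q12 q22 i)
        = (q21⁻¹ * (1 - q12 * q21 * q22 ^ (i - 1)) * qnum q22⁻¹ i) • uu q12 q22 (i - 1) ∧
      ((⇑D2)^[i] (uu q12 q22 i) = 0 ↔
        ∃ j < i, (1 - q12 * q21 * q22 ^ j) * qnum q22⁻¹ (j + 1) = 0) :=
  D_u_eq_general q11 q12 q21 q22 hq12 hq21 hq22 D1 hD1x1 hD1x2 hD1mul D2 hD2x1 hD2x2 hD2mul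
end
end

section
/- For every i ∈ ℕ₀ one has (D₁^i ∘ D₂)(z_{i,1}) = d_{i,0}·c_i·z_{i+1}, where z_{i,1} := z_{i+1}·z_i − q11^{i(i+1)}·q12^{i+1}·q21^i·q22·z_i·z_{i+1}, c_i := q21^{-i}·b_i·[i]!_{q11^{-1}}, and d_{i,0} := q21^{-1}·(1 − q11^i·q12·q21)·[i+1]_{q11^{-1}} + (q11^{i(i+1)}·q12^i·q21^{i+1}·q22)^{-1} − q11^{i(i+1)}·q12^{i+1}·q21^i·q22. -/
/-!
The `z_j` are killed by `D₁`, and the twisted Leibniz rule gives `D₂ z_j = q21⁻ʲ b_j x₁ʲ`. Hence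
`D₂ z_{i,1}` is a combination of `x₁^{i+1} z_i`, `z_{i+1} x₁ⁱ`, `x₁ⁱ z_{i+1}` and `z_i x₁^{i+1}`.
On `x₁^{n+m} w` and `w x₁^{n+m}` with `D₁ w = 0` and `w` an eigenvector of `α₁`, the operator `D₁ⁿ`
strips `n` factors `x₁` at the cost of a ratio of `q11⁻¹`-factorials and a power of the eigenvalue.
What is left of `D₁ⁱ D₂ z_{i,1}` is a combination of `z_{i+1}`, `x₁ z_i` and `z_i x₁`, the last two
occurring in the proportion `1 : -q11ⁱ q12` of `z_{i+1} = x₁ z_i - q11ⁱ q12 z_i x₁`.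
-/

noncomputable section

variable {k : Type*} [Field k]

theorem qnum_succ (p : k) (m : ℕ) : qnum p (m + 1) = 1 + p * qnum p m := by
  rw [qnum, geom_sum_succ, add_comm, qnum]

theorem qnum_succ' (p : k) (m : ℕ) : qnum p (m + 1) = qnum p m + p ^ m := by
  rw [qnum, geom_sum_succ', add_comm, qnum]

theorem qfact_succ (p : k) (m : ℕ) : qfact p (m + 1) = qnum p (m + 1) * qfact p m := by
  rw [qfact, Finset.prod_range_succ, mul_comm, qfact]

theorem qfact_zero (p : k) : qfact p 0 = 1 :=
  Finset.prod_range_zero _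

theorem qfact_one (p : k) : qfact p 1 = 1 := by
  simp [qfact, qnum]

def IsSkewDerivation {A : Type*} [Ring A] [Algebra k A] (σ : A →ₐ[k] A) (D : A →ₗ[k] A) : Prop :=
  ∀ a b : A, D (a * b) = D a * b + σ a * D b

namespace IsSkewDerivation

variable {A : Type*} [Ring A] [Algebra k A] {σ : A →ₐ[k] A} {D : A →ₗ[k] A}
  {x w : A} {p s : k}

theorem apply_pow_succ_mul (hD : IsSkewDerivation σ D) (hDx : D x = 1) (hσx : σ x = p • x)
    (hDw : D w = 0) (m : ℕ) : D (x ^ (m + 1) * w) = qnum p (m + 1) • (x ^ m * w) := by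
  induction m with
  | zero => simp [hD _ w, hDx, hDw, qnum]
  | succ m ih =>
    rw [pow_succ', mul_assoc, hD, ih, hDx, hσx, one_mul, smul_mul_smul_comm, ← mul_assoc,
      ← pow_succ', qnum_succ p (m + 1), add_smul, one_smul]

theorem apply_mul_pow_succ (hD : IsSkewDerivation σ D) (hDx : D x = 1) (hσx : σ x = p • x)
    (hDw : D w = 0) (hσw : σ w = s • w) (m : ℕ) :
    D (w * x ^ (m + 1)) = (s * qnum p (m + 1)) • (w * x ^ m) := by
  induction m with
  | zero => simp [hD w, hDx, hDw, hσw, qnum]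
  | succ m ih =>
    rw [pow_succ, ← mul_assoc, hD, ih, hDx, map_mul, map_pow, hσw, hσx, mul_one, smul_pow,
      smul_mul_smul_comm, smul_mul_assoc, mul_assoc, ← pow_succ, ← add_smul, qnum_succ' p (m + 1),
      mul_add]

theorem qfact_smul_iterate_pow_add_mul (hD : IsSkewDerivation σ D) (hDx : D x = 1)
    (hσx : σ x = p • x) (hDw : D w = 0) (n m : ℕ) :
    qfact p m • D^[n] (x ^ (n + m) * w) = qfact p (n + m) • (x ^ m * w) := by
  induction n with
  | zero => simp
  | succ n ih =>
    rw [add_right_comm, Function.iterate_succ_apply, apply_pow_succ_mul hD hDx hσx hDw,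
      ← Module.End.pow_apply, map_smul, Module.End.pow_apply, smul_comm, ih, smul_smul,
      ← qfact_succ]

theorem qfact_smul_iterate_mul_pow_add (hD : IsSkewDerivation σ D) (hDx : D x = 1)
    (hσx : σ x = p • x) (hDw : D w = 0) (hσw : σ w = s • w) (n m : ℕ) :
    qfact p m • D^[n] (w * x ^ (n + m)) = (s ^ n * qfact p (n + m)) • (w * x ^ m) := by
  induction n with
  | zero => simp
  | succ n ih =>
    rw [add_right_comm, Function.iterate_succ_apply, apply_mul_pow_succ hD hDx hσx hDw hσw,
      ← Module.End.pow_apply, map_smul, Module.End.pow_apply, smul_comm, ih, smul_smul,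
      qfact_succ]
    congr 1
    ring

end IsSkewDerivation

local notation "x₁" => FreeAlgebra.ι _ (0 : Fin 2)
local notation "x₂" => FreeAlgebra.ι _ (1 : Fin 2)

@[simp]
theorem alph_x₁ (a b : k) : alph a b x₁ = a • x₁ := by
  simp [alph]

@[simp]
theorem alph_x₂ (a b : k) : alph a b x₂ = b • x₂ := by
  simp [alph]

theorem alph_zz (a b q11 q12 : k) (j : ℕ) :
    alph a b (zz q11 q12 j) = (a ^ j * b) • zz q11 q12 j := by
  induction j with
  | zero => simp [zz]
  | succ j ih =>
    simp only [zz, map_sub, map_smul, map_mul, alph_x₁, ih, smul_mul_smul_comm, smul_sub, smul_smul]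
    congr 2 <;> ring

theorem bb_succ (q11 q12 q21 : k) (i : ℕ) :
    bb q11 q12 q21 (i + 1) = bb q11 q12 q21 i * (1 - q11 ^ i * q12 * q21) :=
  Finset.prod_range_succ _ _

variable {q11 q12 q21 t : k} {D : FreeAlgebra k (Fin 2) →ₗ[k] FreeAlgebra k (Fin 2)}

theorem apply_zz_eq_zero (hq11 : q11 ≠ 0) (hq12 : q12 ≠ 0)
    (hD : IsSkewDerivation (alph q11⁻¹ q12⁻¹) D) (hDx₁ : D x₁ = 1) (hDx₂ : D x₂ = 0) (j : ℕ) :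
    D (zz q11 q12 j) = 0 := by
  induction j with
  | zero => exact hDx₂
  | succ j ih =>
    have hunit : q11 ^ j * q12 * (q11⁻¹ ^ j * q12⁻¹) = 1 := by
      rw [inv_pow]; field_simp
    rw [zz, map_sub, map_smul, hD, hD, ih, hDx₁, alph_zz, mul_zero, add_zero, zero_mul, zero_add,
      one_mul, mul_one, smul_smul, hunit, one_smul, sub_self]

theorem apply_zz (hq21 : q21 ≠ 0) (hD : IsSkewDerivation (alph q21⁻¹ t) D) (hDx₁ : D x₁ = 0)
    (hDx₂ : D x₂ = 1) (j : ℕ) :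
    D (zz q11 q12 j) = (q21⁻¹ ^ j * bb q11 q12 q21 j) • x₁ ^ j := by
  induction j with
  | zero => simpa [zz, bb] using hDx₂
  | succ j ih =>
    rw [zz, map_sub, map_smul, hD, hD, ih, hDx₁, alph_x₁, zero_mul, zero_add, mul_zero, add_zero,
      smul_mul_smul_comm, smul_mul_assoc, ← pow_succ', ← pow_succ, smul_smul, ← sub_smul]
    congr 1
    simp only [bb_succ, inv_pow]
    field_simp
    ring

theorem apply_zz_mul_zz (hq21 : q21 ≠ 0) (hD : IsSkewDerivation (alph q21⁻¹ t) D)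
    (hDx₁ : D x₁ = 0) (hDx₂ : D x₂ = 1) (a b : ℕ) :
    D (zz q11 q12 a * zz q11 q12 b) =
      (q21⁻¹ ^ a * bb q11 q12 q21 a) • (x₁ ^ a * zz q11 q12 b)
        + (q21⁻¹ ^ a * t * (q21⁻¹ ^ b * bb q11 q12 q21 b)) • (zz q11 q12 a * x₁ ^ b) := by
  rw [hD, apply_zz hq21 hD hDx₁ hDx₂, apply_zz hq21 hD hDx₁ hDx₂, alph_zz, smul_mul_assoc,
    smul_mul_smul_comm]

section
variable {D₁ D₂ : FreeAlgebra k (Fin 2) →ₗ[k] FreeAlgebra k (Fin 2)}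
  (hq11 : q11 ≠ 0) (hq12 : q12 ≠ 0) (hq21 : q21 ≠ 0)
  (hD₁ : IsSkewDerivation (alph q11⁻¹ q12⁻¹) D₁) (hD₁x₁ : D₁ x₁ = 1) (hD₁x₂ : D₁ x₂ = 0)
  (hD₂ : IsSkewDerivation (alph q21⁻¹ t) D₂) (hD₂x₁ : D₂ x₁ = 0) (hD₂x₂ : D₂ x₂ = 1)
include hq11 hq12 hq21 hD₁ hD₁x₁ hD₁x₂ hD₂ hD₂x₁ hD₂x₂

theorem iterate_apply_zz_succ_mul_zz (i : ℕ) :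
    D₁^[i] (D₂ (zz q11 q12 (i + 1) * zz q11 q12 i)) =
      (q21⁻¹ ^ (i + 1) * bb q11 q12 q21 (i + 1) * qfact q11⁻¹ (i + 1)) • (x₁ * zz q11 q12 i)
        + (q21⁻¹ ^ (i + 1) * t * (q21⁻¹ ^ i * bb q11 q12 q21 i)
            * ((q11⁻¹ ^ (i + 1) * q12⁻¹) ^ i * qfact q11⁻¹ i)) • zz q11 q12 (i + 1) := by
  have hz := apply_zz_eq_zero hq11 hq12 hD₁ hD₁x₁ hD₁x₂
  have hx₁ : alph q11⁻¹ q12⁻¹ x₁ = q11⁻¹ • x₁ := alph_x₁ _ _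
  have hl := hD₁.qfact_smul_iterate_pow_add_mul hD₁x₁ hx₁ (hz i) i 1
  have hr := hD₁.qfact_smul_iterate_mul_pow_add hD₁x₁ hx₁ (hz (i + 1)) (alph_zz _ _ _ _ _) i 0
  simp only [qfact_one, qfact_zero, one_smul, pow_one, pow_zero, add_zero, mul_one] at hl hr
  rw [apply_zz_mul_zz hq21 hD₂ hD₂x₁ hD₂x₂, ← Module.End.pow_apply, map_add, map_smul, map_smul,
    Module.End.pow_apply, Module.End.pow_apply, hl, hr, smul_smul, smul_smul]

theorem iterate_apply_zz_mul_zz_succ (i : ℕ) :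
    D₁^[i] (D₂ (zz q11 q12 i * zz q11 q12 (i + 1))) =
      (q21⁻¹ ^ i * bb q11 q12 q21 i * qfact q11⁻¹ i) • zz q11 q12 (i + 1)
        + (q21⁻¹ ^ i * t * (q21⁻¹ ^ (i + 1) * bb q11 q12 q21 (i + 1))
            * ((q11⁻¹ ^ i * q12⁻¹) ^ i * qfact q11⁻¹ (i + 1))) • (zz q11 q12 i * x₁) := by
  have hz := apply_zz_eq_zero hq11 hq12 hD₁ hD₁x₁ hD₁x₂
  have hx₁ : alph q11⁻¹ q12⁻¹ x₁ = q11⁻¹ • x₁ := alph_x₁ _ _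
  have hl := hD₁.qfact_smul_iterate_pow_add_mul hD₁x₁ hx₁ (hz (i + 1)) i 0
  have hr := hD₁.qfact_smul_iterate_mul_pow_add hD₁x₁ hx₁ (hz i) (alph_zz _ _ _ _ _) i 1
  simp only [qfact_one, qfact_zero, one_smul, pow_one, pow_zero, add_zero, one_mul] at hl hr
  rw [apply_zz_mul_zz hq21 hD₂ hD₂x₁ hD₂x₂, ← Module.End.pow_apply, map_add, map_smul, map_smul,
    Module.End.pow_apply, Module.End.pow_apply, hl, hr, smul_smul, smul_smul]

end

theorem D1_pow_D2_z_i1_general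
    (q11 q12 q21 q22 : k)
    (hq11 : q11 ≠ 0) (hq12 : q12 ≠ 0) (hq21 : q21 ≠ 0) (hq22 : q22 ≠ 0)
    (D1 : FreeAlgebra k (Fin 2) →ₗ[k] FreeAlgebra k (Fin 2))
    (hD1x1 : D1 (FreeAlgebra.ι k 0) = 1)
    (hD1x2 : D1 (FreeAlgebra.ι k 1) = 0)
    (hD1mul : ∀ a b : FreeAlgebra k (Fin 2),
      D1 (a * b) = D1 a * b + alph q11⁻¹ q12⁻¹ a * D1 b)
    (D2 : FreeAlgebra k (Fin 2) →ₗ[k] FreeAlgebra k (Fin 2))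
    (hD2x1 : D2 (FreeAlgebra.ι k 0) = 0)
    (hD2x2 : D2 (FreeAlgebra.ι k 1) = 1)
    (hD2mul : ∀ a b : FreeAlgebra k (Fin 2),
      D2 (a * b) = D2 a * b + alph q21⁻¹ q22⁻¹ a * D2 b)
 :
    ∀ i : ℕ,
      (⇑D1)^[i] (D2 (zz q11 q12 (i + 1) * zz q11 q12 i
          - (q11 ^ (i * (i + 1)) * q12 ^ (i + 1) * q21 ^ i * q22)
              • (zz q11 q12 i * zz q11 q12 (i + 1))))
        = (dd q11 q12 q21 q22 i * cc q11 q12 q21 i) • zz q11 q12 (i + 1) := by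
  intro i
  rw [map_sub, map_smul, ← Module.End.pow_apply, map_sub, map_smul, Module.End.pow_apply,
    Module.End.pow_apply,
    iterate_apply_zz_succ_mul_zz hq11 hq12 hq21 hD1mul hD1x1 hD1x2 hD2mul hD2x1 hD2x2,
    iterate_apply_zz_mul_zz_succ hq11 hq12 hq21 hD1mul hD1x1 hD1x2 hD2mul hD2x1 hD2x2]
  -- unfold `zz q11 q12 (i + 1)` and compare the coefficients of `x₁ * zz i` and `zz i * x₁`
  simp only [zz, smul_sub, smul_add, smul_smul, dd, cc, bb_succ, qfact_succ]
  match_scalars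
  all_goals
    simp only [mul_pow, ← pow_mul, inv_pow]
    field_simp
    ring

theorem D1_pow_D2_z_i1
    (q11 q12 q21 q22 : k)
    (hq11 : q11 ≠ 0) (hq12 : q12 ≠ 0) (hq21 : q21 ≠ 0) (hq22 : q22 ≠ 0)
    (D1 : FreeAlgebra k (Fin 2) →ₗ[k] FreeAlgebra k (Fin 2))
    (hD1one : D1 1 = 0)
    (hD1x1 : D1 (FreeAlgebra.ι k 0) = 1)
    (hD1x2 : D1 (FreeAlgebra.ι k 1) = 0)
    (hD1mul : ∀ a b : FreeAlgebra k (Fin 2),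
      D1 (a * b) = D1 a * b + alph q11⁻¹ q12⁻¹ a * D1 b)
    (D2 : FreeAlgebra k (Fin 2) →ₗ[k] FreeAlgebra k (Fin 2))
    (hD2one : D2 1 = 0)
    (hD2x1 : D2 (FreeAlgebra.ι k 0) = 0)
    (hD2x2 : D2 (FreeAlgebra.ι k 1) = 1)
    (hD2mul : ∀ a b : FreeAlgebra k (Fin 2),
      D2 (a * b) = D2 a * b + alph q21⁻¹ q22⁻¹ a * D2 b)
 :
    ∀ i : ℕ,
      (⇑D1)^[i] (D2 (zz q11 q12 (i + 1) * zz q11 q12 i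
          - (q11 ^ (i * (i + 1)) * q12 ^ (i + 1) * q21 ^ i * q22)
              • (zz q11 q12 i * zz q11 q12 (i + 1))))
        = (dd q11 q12 q21 q22 i * cc q11 q12 q21 i) • zz q11 q12 (i + 1) :=
  D1_pow_D2_z_i1_general q11 q12 q21 q22 hq11 hq12 hq21 hq22 D1 hD1x1 hD1x2 hD1mul D2 hD2x1 hD2x2
    hD2mul
end
end
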